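/- Assume L ⊆ Σ^ω is recognized by some deterministic co-Büchi automaton. Then the canonical automaton A_{≡_L} is semantically-deterministic, unsafe-saturated, normalized, and history-deterministic. -/

import Mathlib

open Classical

/-- Rank of a transition in a co-Büchi automaton: `one` or `two`. -/
inductive Rk | one | two
deriving DecidableEq

/-- A co-Büchi automaton over alphabet `A` with state type `Q`:
initial states and a transition relation where each transition carries a rank. -/
structure CoBuchi (A : Type) (Q : Type) where
  init : Set Q
  delta : Set (Q × A × Rk × Q)

namespace CoBuchi

variable {A Q : Type}

/-- Every state has an outgoing transition on every letter. -/
def Total (M : CoBuchi A Q) : Prop :=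
  ∀ q a, ∃ r q', (q, a, r, q') ∈ M.delta

/-- The prefix `α[0..n-1]` of an infinite word. -/
def prefW (α : ℕ → A) (n : ℕ) : List A := (List.range n).map α

/-- The infinite word `a·w`. -/
def consW (a : A) (w : ℕ → A) : ℕ → A := fun n => match n with
  | 0 => a
  | Nat.succ k => w k

/-- `L(M,q)`: infinite words having a run from `q` with only finitely many rank-1
transitions. -/
def LangFrom (M : CoBuchi A Q) (q : Q) : Set (ℕ → A) :=
  { w | ∃ (ρ : ℕ → Q) (r : ℕ → Rk), ρ 0 = q ∧
        (∀ n, (ρ n, w n, r n, ρ (n + 1)) ∈ M.delta) ∧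
        ∃ N, ∀ n, N ≤ n → r n = Rk.two }

/-- `L(M)`: the language of the automaton. -/
def Lang (M : CoBuchi A Q) : Set (ℕ → A) :=
  { w | ∃ q ∈ M.init, w ∈ M.LangFrom q }

/-- `q →₂^w q'`: a finite run from `q` to `q'` on `w` using only rank-2 transitions. -/
def SafeReach (M : CoBuchi A Q) : Q → List A → Q → Prop
  | q, [], q' => q = q'
  | q, a :: w, q' => ∃ p, (q, a, Rk.two, p) ∈ M.delta ∧ SafeReach M p w q'

/-- A finite run from `q` to `q'` on `w` using transitions of any rank. -/
def Reach (M : CoBuchi A Q) : Q → List A → Q → Prop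
  | q, [], q' => q = q'
  | q, a :: w, q' => ∃ r p, (q, a, r, p) ∈ M.delta ∧ Reach M p w q'

/-- Safe language of a state. -/
def Lsf (M : CoBuchi A Q) (q : Q) : Set (List A) := { w | ∃ q', M.SafeReach q w q' }

/-- Semantically-deterministic: every transition respects residuals. -/
def SemDet (M : CoBuchi A Q) : Prop :=
  ∀ p a rk q, (p, a, rk, q) ∈ M.delta →
    M.LangFrom q = { w | consW a w ∈ M.LangFrom p }

/-- Unsafe-saturated: all residual-respecting rank-1 transitions are present. -/
def UnsafeSat (M : CoBuchi A Q) : Prop :=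
  ∀ p a q, M.LangFrom q = { w | consW a w ∈ M.LangFrom p } →
    (p, a, Rk.one, q) ∈ M.delta

/-- Safe-deterministic: at most one rank-2 transition per state and letter. -/
def SafeDet (M : CoBuchi A Q) : Prop :=
  ∀ p a q q', (p, a, Rk.two, q) ∈ M.delta → (p, a, Rk.two, q') ∈ M.delta → q = q'

/-- Normalized: every rank-2 transition can be completed to a rank-2 loop. -/
def Normalized (M : CoBuchi A Q) : Prop :=
  ∀ q a q', (q, a, Rk.two, q') ∈ M.delta → ∃ x, M.SafeReach q' x q

/-- Deterministic: one initial state, exactly one transition per state and letter. -/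
def Deterministic (M : CoBuchi A Q) : Prop :=
  (∃! q, q ∈ M.init) ∧ ∀ p a, ∃! t : Rk × Q, (p, a, t.1, t.2) ∈ M.delta

/-- History-deterministic: a strategy `σ : Σ* → Q` resolving the nondeterminism,
whose run on every `α ∈ L(M)` can be ranked with finitely many rank-1 transitions. -/
def HistoryDet (M : CoBuchi A Q) : Prop :=
  ∃ σ : List A → Q, σ [] ∈ M.init ∧
    (∀ w a, ∃ rk, (σ w, a, rk, σ (w ++ [a])) ∈ M.delta) ∧
    ∀ α ∈ M.Lang, ∃ r : ℕ → Rk,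
      (∀ n, (σ (prefW α n), α n, r n, σ (prefW α (n + 1))) ∈ M.delta) ∧
      ∃ N, ∀ n, N ≤ n → r n = Rk.two

/-- `q` and `q'` are in the same safe SCC (mutually reachable via rank-2 runs). -/
def SameSafeSCC (M : CoBuchi A Q) (q q' : Q) : Prop :=
  (∃ x, M.SafeReach q x q') ∧ (∃ y, M.SafeReach q' y q)

end CoBuchi

section LangDefs

variable {A : Type} [Nonempty A]

/-- The infinite word `u·w`. -/
def appW (u : List A) (w : ℕ → A) : ℕ → A :=
  fun n => if h : n < u.length then u.get ⟨n, h⟩ else w (n - u.length)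

/-- The infinite word `v^ω` (arbitrary if `v = ε`). -/
noncomputable def iterW (v : List A) : ℕ → A :=
  fun n =>
    if h : v = [] then Classical.arbitrary A
    else v.get ⟨n % v.length, Nat.mod_lt _ (List.length_pos_iff.mpr h)⟩

/-- The ultimately periodic word `u v^ω`. -/
noncomputable def upW (u v : List A) : ℕ → A := appW u (iterW v)

/-- The right congruence `u ∼_L v`. -/
def SimL (L : Set (ℕ → A)) (u v : List A) : Prop :=
  ∀ w : ℕ → A, appW u w ∈ L ↔ appW v w ∈ L

/-- `(u,v) ≈_L ⊥`: `v ≠ ε` and `u(vx)^ω ∉ L` for all `x` with `uvx ∼_L u`. -/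
def ApproxBot (L : Set (ℕ → A)) (u v : List A) : Prop :=
  v ≠ [] ∧ ∀ x : List A, SimL L (u ++ v ++ x) u → upW u (v ++ x) ∉ L

/-- The safe language of a pair: `sfl(u,v) = {x | (u,vx) not ≈_L ⊥}`. -/
def Sfl (L : Set (ℕ → A)) (u v : List A) : Set (List A) :=
  { x | ¬ ApproxBot L u (v ++ x) }

/-- `(u,v) ≡_L (u',v')`. -/
def EquivL (L : Set (ℕ → A)) (u v u' v' : List A) : Prop :=
  SimL L (u ++ v) (u' ++ v') ∧ Sfl L u v = Sfl L u' v'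

/-- `(u,v)` is pointed. -/
def IsPointed (L : Set (ℕ → A)) (u v : List A) : Prop :=
  ¬ ApproxBot L u v ∧
    ∀ u₁ u₂ : List A, SimL L (u₁ ++ u₂) u → ¬ ApproxBot L u₁ (u₂ ++ v) →
      Sfl L u v = Sfl L u₁ (u₂ ++ v)

/-- `(u,v) ≈_L (u',v')` (for pairs with nonempty second components). -/
def ApproxL (L : Set (ℕ → A)) (u v u' v' : List A) : Prop :=
  SimL L u u' ∧ SimL L (u ++ v) (u' ++ v') ∧
    ∀ x : List A, SimL L (u ++ v ++ x) u →
      (upW u (v ++ x) ∈ L ↔ upW u' (v' ++ x) ∈ L)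

/-- `L` is recognized by some (total) deterministic co-Büchi automaton. -/
def DCWRecognizable (L : Set (ℕ → A)) : Prop :=
  ∃ (Q : Type) (_ : Fintype Q) (M : CoBuchi A Q), M.Deterministic ∧ M.Lang = L

/-- IsPointed pairs. -/
def PointedPair (L : Set (ℕ → A)) : Type :=
  { p : List A × List A // IsPointed L p.1 p.2 }

/-- `≡_L` as a setoid on all pairs. -/
def equivLSetoid (L : Set (ℕ → A)) : Setoid (List A × List A) where
  r p q := EquivL L p.1 p.2 q.1 q.2
  iseqv := {
    refl := fun p => ⟨fun w => Iff.rfl, rfl⟩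
    symm := fun h => ⟨fun w => (h.1 w).symm, h.2.symm⟩
    trans := fun h g => ⟨fun w => (h.1 w).trans (g.1 w), h.2.trans g.2⟩ }

/-- `≡_L` as a setoid on pointed pairs. -/
def canonSetoid (L : Set (ℕ → A)) : Setoid (PointedPair L) where
  r p q := EquivL L p.1.1 p.1.2 q.1.1 q.1.2
  iseqv := {
    refl := fun p => ⟨fun w => Iff.rfl, rfl⟩
    symm := fun h => ⟨fun w => (h.1 w).symm, h.2.symm⟩
    trans := fun h g => ⟨fun w => (h.1 w).trans (g.1 w), h.2.trans g.2⟩ }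

/-- States of the canonical automaton: `≡_L`-classes of pointed pairs. -/
def CanonState (L : Set (ℕ → A)) : Type := Quotient (canonSetoid L)

/-- The class `⟦u,v⟧` of a pointed pair. -/
def cls (L : Set (ℕ → A)) (u v : List A) (h : IsPointed L u v) : CanonState L :=
  Quotient.mk (canonSetoid L) ⟨(u, v), h⟩

/-- The canonical automaton `A_{≡_L}`. -/
def canonAut (L : Set (ℕ → A)) : CoBuchi A (CanonState L) where
  init := { s | ∃ (u v : List A) (h : IsPointed L u v),
              s = cls L u v h ∧ SimL L (u ++ v) [] }
  delta := { t |
    (∃ (u v : List A) (h : IsPointed L u v) (h' : IsPointed L u (v ++ [t.2.1])),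
        ¬ ApproxBot L u (v ++ [t.2.1]) ∧
        t.1 = cls L u v h ∧ t.2.2.1 = Rk.two ∧
        t.2.2.2 = cls L u (v ++ [t.2.1]) h') ∨
    (∃ (u v u' v' : List A) (h : IsPointed L u v) (h' : IsPointed L u' v'),
        SimL L (u ++ v ++ [t.2.1]) (u' ++ v') ∧
        t.1 = cls L u v h ∧ t.2.2.1 = Rk.one ∧ t.2.2.2 = cls L u' v' h') }

/-- `θ(u,v)`: states of `A_{≡_L}` reachable by reading `u` from an initial state
(any ranks) and then `v` via rank-2 transitions only. -/
def theta (L : Set (ℕ → A)) (u v : List A) : Set (CanonState L) :=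
  { q | ∃ p₀ ∈ (canonAut L).init, ∃ p,
          (canonAut L).Reach p₀ u p ∧ (canonAut L).SafeReach p v q }

/-- `(u,v)` is supported: `θ(u,v) ≠ ∅`. -/
def Supported (L : Set (ℕ → A)) (u v : List A) : Prop := (theta L u v).Nonempty

/-- `(u,v)` is double-supported: two distinct states of `θ(u,v)` in the same safe SCC. -/
def DoubleSupported (L : Set (ℕ → A)) (u v : List A) : Prop :=
  ∃ q ∈ theta L u v, ∃ q' ∈ theta L u v, q ≠ q' ∧ (canonAut L).SameSafeSCC q q'

/-- `(u,v)` is single-supported. -/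
def SingleSupported (L : Set (ℕ → A)) (u v : List A) : Prop :=
  Supported L u v ∧ ¬ DoubleSupported L u v

/-- `w` concatenated with itself `m` times. -/
def repCat (w : List A) : ℕ → List A
  | 0 => []
  | Nat.succ m => w ++ repCat w m

end LangDefs

/-!
Fix a deterministic co-Büchi automaton `M` recognizing `L`. A pair `(u,v)` is not `≈_L ⊥` exactly
when `M` has a state `p` with `L(M,p) = u⁻¹L` at which `v` is a prefix of a safe (rank-2) cycle:
the run of `M` on an accepted `u (vx)^ω` eventually loops safely on a power of `vx`, and conversely
a safe cycle yields such a word. Hence `sfl(u,v)` is a union of safe-cycle prefix languages of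
states of `M`, it takes finitely many values, and a pair with inclusion-minimal `sfl` is pointed.

Consequently every state `⟦u,v⟧` of `A_{≡_L}` recognizes exactly `(uv)⁻¹L`, which gives semantic
determinism and unsafe saturation. For `⊆`, a run eventually takes only rank-2 edges, so every
prefix of the remaining suffix is safe for a pointed pair, and by finiteness a single state of `M`
reads all of them safely. For `⊇` and for history determinism we use one strategy: after `w`, it
sits on a pointed pair whose safe language contains every safe-cycle prefix at the state of `M`
reached at the anchor of `w` (the first position from which `M` reads the rest of `w` inside a safe
cycle), extended by the rest of `w`. It takes a rank-2 edge whenever the anchor stays put, and along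
an accepted word the anchor is monotone and bounded.
-/

open CoBuchi

section Words

variable {A : Type}

def dropW (α : ℕ → A) (n : ℕ) : ℕ → A := fun k => α (n + k)

@[simp] lemma appW_nil (w : ℕ → A) : appW [] w = w := by
  funext n; simp [appW]

lemma appW_of_lt (u : List A) (w : ℕ → A) {n : ℕ} (h : n < u.length) :
    appW u w n = u[n] := by
  simp [appW, h]

lemma appW_of_le (u : List A) (w : ℕ → A) {n : ℕ} (h : u.length ≤ n) :
    appW u w n = w (n - u.length) := by
  simp [appW, Nat.not_lt.2 h]

@[simp] lemma appW_length_add (u : List A) (w : ℕ → A) (n : ℕ) :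
    appW u w (u.length + n) = w n := by
  simp [appW_of_le u w (Nat.le_add_right _ n)]

lemma appW_append (u v : List A) (w : ℕ → A) :
    appW (u ++ v) w = appW u (appW v w) := by
  funext n
  rcases lt_or_ge n u.length with h | h
  · rw [appW_of_lt _ _ (by simp; omega), appW_of_lt _ _ h, List.getElem_append_left h]
  · rw [appW_of_le _ _ h]
    rcases lt_or_ge n (u.length + v.length) with h' | h'
    · rw [appW_of_lt _ _ (by simp; omega), appW_of_lt _ _ (by omega), List.getElem_append_right h]
    · rw [appW_of_le _ _ (by simp; omega), appW_of_le _ _ (by omega)]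
      simp only [List.length_append]; congr 1; omega

lemma appW_singleton (a : A) (w : ℕ → A) : appW [a] w = consW a w := by
  funext n
  cases n with
  | zero => rfl
  | succ k => simp [appW_of_le [a] w (Nat.le_add_left 1 k), consW]

@[simp] lemma length_prefW (α : ℕ → A) (n : ℕ) : (prefW α n).length = n := by
  simp [prefW]

@[simp] lemma getElem_prefW (α : ℕ → A) (n i : ℕ) (h : i < (prefW α n).length) :
    (prefW α n)[i] = α i := by
  simp [prefW]

lemma prefW_succ (α : ℕ → A) (n : ℕ) : prefW α (n + 1) = prefW α n ++ [α n] := by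
  simp [prefW, List.range_succ]

lemma prefW_add (α : ℕ → A) (m l : ℕ) :
    prefW α (m + l) = prefW α m ++ prefW (dropW α m) l := by
  induction l with
  | zero => simp [prefW]
  | succ l ih => rw [← Nat.add_assoc, prefW_succ, ih, prefW_succ, List.append_assoc]; rfl

lemma prefW_prefix (α : ℕ → A) {m n : ℕ} (h : m ≤ n) : prefW α m <+: prefW α n := by
  obtain ⟨l, rfl⟩ := Nat.exists_eq_add_of_le h
  rw [prefW_add]
  exact List.prefix_append _ _

lemma take_prefW (α : ℕ → A) {m n : ℕ} (h : m ≤ n) : (prefW α n).take m = prefW α m := by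
  obtain ⟨l, rfl⟩ := Nat.exists_eq_add_of_le h
  rw [prefW_add, List.take_append_of_le_length (by simp), List.take_of_length_le (by simp)]

lemma drop_prefW (α : ℕ → A) {m n : ℕ} (h : m ≤ n) :
    (prefW α n).drop m = prefW (dropW α m) (n - m) := by
  obtain ⟨l, rfl⟩ := Nat.exists_eq_add_of_le h
  rw [prefW_add, List.drop_append_of_le_length (by simp), List.drop_of_length_le (by simp)]
  simp

lemma appW_prefW_dropW (α : ℕ → A) (n : ℕ) : appW (prefW α n) (dropW α n) = α := by
  funext k
  rcases lt_or_ge k n with h | h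
  · rw [appW_of_lt _ _ (by simpa using h), getElem_prefW]
  · rw [appW_of_le _ _ (by simpa using h)]
    simp only [dropW, length_prefW]; congr 1; omega

lemma prefW_appW (x : List A) (w : ℕ → A) (n : ℕ) :
    prefW (appW x w) (x.length + n) = x ++ prefW w n := by
  rw [prefW_add]
  congr 1
  · apply List.ext_getElem (by simp)
    intro i _ h
    rw [getElem_prefW, appW_of_lt _ _ h]
  · congr 1; funext k; simp [dropW]

lemma repCat_one (w : List A) : repCat w 1 = w := List.append_nil w

lemma repCat_add (w : List A) (m n : ℕ) : repCat w (m + n) = repCat w m ++ repCat w n := by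
  induction m with
  | zero => simp [repCat]
  | succ m ih => rw [Nat.add_right_comm, repCat, repCat, ih, List.append_assoc]

lemma iterW_apply [Nonempty A] {v : List A} (hv : v ≠ []) (n : ℕ) :
    iterW v n = v[n % v.length]'(Nat.mod_lt _ (List.length_pos_iff.2 hv)) := by
  simp [iterW, hv]

lemma dropW_iterW [Nonempty A] {v : List A} (hv : v ≠ []) (k : ℕ) :
    dropW (iterW v) (k * v.length) = iterW v := by
  funext n
  simp only [dropW, iterW_apply hv, Nat.mul_add_mod_self_right]

lemma prefW_iterW [Nonempty A] {v : List A} (hv : v ≠ []) (k : ℕ) :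
    prefW (iterW v) (k * v.length) = repCat v k := by
  induction k with
  | zero => simp [prefW, repCat]
  | succ k ih =>
    have hfirst : prefW (iterW v) v.length = v := by
      apply List.ext_getElem (by simp)
      intro i h _
      rw [getElem_prefW, iterW_apply hv]
      simp only [length_prefW] at h
      simp [Nat.mod_eq_of_lt h]
    rw [Nat.succ_mul, Nat.add_comm, prefW_add, hfirst,
      ← Nat.one_mul v.length, dropW_iterW hv, Nat.one_mul, ih]
    rfl

lemma exists_frequently_eq {Q : Type} [Finite Q] (f : ℕ → Q) :
    ∃ p, ∀ k, ∃ n, k ≤ n ∧ f n = p := by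
  obtain ⟨p, hp⟩ := Finite.exists_infinite_fiber f
  exact ⟨p, Filter.frequently_atTop.1
    (Nat.frequently_atTop_iff_infinite.2 (Set.infinite_coe_iff.1 hp))⟩

end Words

section Residuals

variable {A : Type} (L : Set (ℕ → A))

def ResL (u : List A) : Set (ℕ → A) := {w | appW u w ∈ L}

variable {L}

lemma simL_iff_resL {u v : List A} : SimL L u v ↔ ResL L u = ResL L v := by
  rw [Set.ext_iff]; rfl

variable (L)

@[simp] lemma resL_nil : ResL L [] = L := by
  ext w; simp [ResL]

lemma resL_append (u v : List A) : ResL L (u ++ v) = {w | appW v w ∈ ResL L u} := by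
  ext w; simp [ResL, appW_append]

lemma resL_snoc (u : List A) (a : A) : ResL L (u ++ [a]) = {w | consW a w ∈ ResL L u} := by
  simp [resL_append, appW_singleton]

variable {L}

lemma resL_append_congr {u u' : List A} (h : ResL L u = ResL L u') (x : List A) :
    ResL L (u ++ x) = ResL L (u' ++ x) := by
  rw [resL_append, resL_append, h]

lemma resL_append_repCat {u w : List A} (h : ResL L (u ++ w) = ResL L u) (k : ℕ) :
    ResL L (u ++ repCat w k) = ResL L u := by
  induction k with
  | zero => simp [repCat]
  | succ k ih => rw [repCat, ← List.append_assoc, resL_append_congr h, ih]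

end Residuals

lemma sfl_append {A : Type} [Nonempty A] (L : Set (ℕ → A)) (u v w : List A) :
    Sfl L u (v ++ w) = {y | w ++ y ∈ Sfl L u v} := by
  simp [Sfl, List.append_assoc]

section Canonical

variable {A : Type} [Nonempty A] {L : Set (ℕ → A)}

def CanonState.residual (s : CanonState L) : Set (ℕ → A) :=
  Quotient.lift (fun q : PointedPair L => ResL L (q.1.1 ++ q.1.2))
    (fun p q (h : EquivL L p.1.1 p.1.2 q.1.1 q.1.2) => simL_iff_resL.1 h.1) s

@[simp] lemma residual_cls {u v : List A} (h : IsPointed L u v) :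
    (cls L u v h).residual = ResL L (u ++ v) := rfl

lemma cls_eq_cls_iff {u v u' v' : List A} {h : IsPointed L u v} {h' : IsPointed L u' v'} :
    cls L u v h = cls L u' v' h' ↔ EquivL L u v u' v' :=
  ⟨Quotient.exact, fun h => Quotient.sound h⟩

lemma cls_congr {u v u' v' : List A} (hu : u = u') (hv : v = v') (h : IsPointed L u v)
    (h' : IsPointed L u' v') : cls L u v h = cls L u' v' h' := by
  subst hu hv; rfl

lemma CanonState.exists_eq_cls (s : CanonState L) :
    ∃ u v, ∃ h : IsPointed L u v, s = cls L u v h := by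
  obtain ⟨⟨⟨u, v⟩, h⟩, rfl⟩ := Quotient.exists_rep s
  exact ⟨u, v, h, rfl⟩

lemma EquivL.append {u v u' v' : List A} (h : EquivL L u v u' v') (x : List A) :
    EquivL L u (v ++ x) u' (v' ++ x) := by
  refine ⟨simL_iff_resL.2 ?_, by rw [sfl_append, sfl_append, h.2]⟩
  rw [← List.append_assoc, ← List.append_assoc]
  exact resL_append_congr (simL_iff_resL.1 h.1) x

lemma residual_of_mem_delta {s s' : CanonState L} {a : A} {rk : Rk}
    (hmem : (s, a, rk, s') ∈ (canonAut L).delta) : s'.residual = {w | consW a w ∈ s.residual} := by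
  rcases hmem with ⟨u, v, h, h', -, he, -, he'⟩ | ⟨u, v, u', v', h, h', hsim, he, -, he'⟩
  · dsimp only at he he'
    rw [he, he', residual_cls, residual_cls, ← List.append_assoc, resL_snoc]
  · dsimp only at he he' hsim
    rw [he, he', residual_cls, residual_cls, ← simL_iff_resL.1 hsim, resL_snoc]

lemma rank_one_mem_delta_iff {s s' : CanonState L} {a : A} :
    (s, a, Rk.one, s') ∈ (canonAut L).delta ↔ s'.residual = {w | consW a w ∈ s.residual} := by
  refine ⟨residual_of_mem_delta, fun h => ?_⟩
  obtain ⟨u, v, hp, rfl⟩ := s.exists_eq_cls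
  obtain ⟨u', v', hp', rfl⟩ := s'.exists_eq_cls
  refine Or.inr ⟨u, v, u', v', hp, hp', simL_iff_resL.2 ?_, rfl, rfl, rfl⟩
  rw [resL_snoc]
  exact h.symm

lemma mem_init_iff {s : CanonState L} : s ∈ (canonAut L).init ↔ s.residual = L := by
  obtain ⟨u, v, h, rfl⟩ := s.exists_eq_cls
  constructor
  · rintro ⟨u', v', h', he, hsim⟩
    rw [he, residual_cls, simL_iff_resL.1 hsim, resL_nil]
  · intro hres
    exact ⟨u, v, h, rfl, simL_iff_resL.2 (by rw [resL_nil]; exact hres)⟩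

end Canonical

namespace CoBuchi

variable {A Q : Type} {M : CoBuchi A Q}

def safeLoopPrefixes (M : CoBuchi A Q) (p : Q) : Set (List A) :=
  {w | ∃ z, M.SafeReach p (w ++ z) p}

lemma safeReach_append {p q : Q} {u v : List A} :
    M.SafeReach p (u ++ v) q ↔ ∃ r, M.SafeReach p u r ∧ M.SafeReach r v q := by
  induction u generalizing p with
  | nil => simp [SafeReach]
  | cons a u ih =>
    simp only [List.cons_append, SafeReach, ih]
    exact ⟨fun ⟨p', ha, r, hu, hv⟩ => ⟨r, ⟨p', ha, hu⟩, hv⟩,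
      fun ⟨r, ⟨p', ha, hu⟩, hv⟩ => ⟨p', ha, r, hu, hv⟩⟩

lemma safeReach_singleton {p q : Q} {a : A} :
    M.SafeReach p [a] q ↔ (p, a, Rk.two, q) ∈ M.delta := by
  simp [SafeReach]

lemma safeReach_repCat {p : Q} {c : List A} (h : M.SafeReach p c p) (k : ℕ) :
    M.SafeReach p (repCat c k) p := by
  induction k with
  | zero => rfl
  | succ k ih => exact safeReach_append.2 ⟨p, h, ih⟩

lemma mem_lsf_of_prefix {p : Q} {u w : List A} (h : u <+: w) (hw : w ∈ M.Lsf p) :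
    u ∈ M.Lsf p := by
  obtain ⟨t, rfl⟩ := h
  obtain ⟨q, hq⟩ := hw
  obtain ⟨r, hr, -⟩ := safeReach_append.1 hq
  exact ⟨r, hr⟩

lemma nil_mem_safeLoopPrefixes (p : Q) : [] ∈ M.safeLoopPrefixes p := ⟨[], rfl⟩

lemma mem_safeLoopPrefixes_of_safeReach {p : Q} {c : List A} (h : M.SafeReach p c p) :
    c ∈ M.safeLoopPrefixes p := ⟨[], by rwa [List.append_nil]⟩

lemma mem_safeLoopPrefixes_of_prefix {p : Q} {u w : List A} (h : u <+: w)
    (hw : w ∈ M.safeLoopPrefixes p) : u ∈ M.safeLoopPrefixes p := by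
  obtain ⟨t, rfl⟩ := h
  obtain ⟨z, hz⟩ := hw
  exact ⟨t ++ z, by rwa [← List.append_assoc]⟩

lemma safeLoopPrefixes_subset_lsf (p : Q) : M.safeLoopPrefixes p ⊆ M.Lsf p := fun _ ⟨z, hz⟩ =>
  mem_lsf_of_prefix (List.prefix_append _ z) ⟨p, hz⟩

lemma safeReach_of_run {α : ℕ → A} {ρ : ℕ → Q} {r : ℕ → Rk}
    (hstep : ∀ n, (ρ n, α n, r n, ρ (n + 1)) ∈ M.delta) {N : ℕ}
    (hN : ∀ n, N ≤ n → r n = Rk.two) (l : ℕ) :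
    M.SafeReach (ρ N) (prefW (dropW α N) l) (ρ (N + l)) := by
  induction l with
  | zero => rfl
  | succ l ih =>
    rw [prefW_succ, safeReach_append]
    refine ⟨ρ (N + l), ih, safeReach_singleton.2 ?_⟩
    simpa [dropW, Nat.add_assoc, hN (N + l) (Nat.le_add_right N l)] using hstep (N + l)

namespace Deterministic

variable (hdet : M.Deterministic)

noncomputable def next (p : Q) (a : A) : Rk × Q := (hdet.2 p a).exists.choose

lemma mem_delta_iff {p q : Q} {a : A} {rk : Rk} :
    (p, a, rk, q) ∈ M.delta ↔ (rk, q) = hdet.next p a :=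
  ⟨fun h => (hdet.2 p a).unique h (hdet.2 p a).exists.choose_spec,
    fun h => h ▸ (hdet.2 p a).exists.choose_spec⟩

noncomputable def read (p : Q) (w : List A) : Q := w.foldl (fun q a => (hdet.next q a).2) p

@[simp] lemma read_nil (p : Q) : hdet.read p [] = p := rfl

lemma read_cons (p : Q) (a : A) (w : List A) :
    hdet.read p (a :: w) = hdet.read (hdet.next p a).2 w := rfl

lemma read_append (p : Q) (u v : List A) :
    hdet.read p (u ++ v) = hdet.read (hdet.read p u) v := by
  simp [read, List.foldl_append]

noncomputable def run (p : Q) (α : ℕ → A) (n : ℕ) : Q := hdet.read p (prefW α n)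

lemma run_succ (p : Q) (α : ℕ → A) (n : ℕ) :
    hdet.run p α (n + 1) = (hdet.next (hdet.run p α n) (α n)).2 := by
  simp [run, prefW_succ, read_append, read_cons]

lemma run_add (p : Q) (α : ℕ → A) (m l : ℕ) :
    hdet.run p α (m + l) = hdet.run (hdet.run p α m) (dropW α m) l := by
  simp [run, prefW_add, read_append]

noncomputable def start : Q := hdet.1.exists.choose

lemma lang_eq : M.Lang = M.LangFrom hdet.start := by
  ext w
  refine ⟨fun ⟨q, hq, hw⟩ => ?_, fun hw => ⟨_, hdet.1.exists.choose_spec, hw⟩⟩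
  rwa [hdet.1.unique hq hdet.1.exists.choose_spec] at hw

lemma eq_run_of_steps {p : Q} {w : ℕ → A} {ρ : ℕ → Q} {r : ℕ → Rk} (h0 : ρ 0 = p)
    (hstep : ∀ n, (ρ n, w n, r n, ρ (n + 1)) ∈ M.delta) (n : ℕ) :
    (r n, ρ (n + 1)) = hdet.next (hdet.run p w n) (w n) ∧ ρ n = hdet.run p w n := by
  induction n with
  | zero => exact ⟨h0 ▸ hdet.mem_delta_iff.1 (hstep 0), h0⟩
  | succ n ih =>
    have hρ : ρ (n + 1) = hdet.run p w (n + 1) := by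
      rw [run_succ, ← ih.2, ← hdet.mem_delta_iff.1 (hstep n)]
    exact ⟨hρ ▸ hdet.mem_delta_iff.1 (hstep (n + 1)), hρ⟩

lemma mem_langFrom_iff {p : Q} {w : ℕ → A} :
    w ∈ M.LangFrom p ↔ ∃ N, ∀ n, N ≤ n → (hdet.next (hdet.run p w n) (w n)).1 = Rk.two := by
  constructor
  · rintro ⟨ρ, r, h0, hstep, N, hN⟩
    exact ⟨N, fun n hn => by rw [← (hdet.eq_run_of_steps h0 hstep n).1]; exact hN n hn⟩
  · rintro ⟨N, hN⟩
    refine ⟨hdet.run p w, fun n => (hdet.next (hdet.run p w n) (w n)).1, rfl, fun n => ?_, N, hN⟩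
    rw [hdet.mem_delta_iff, run_succ]

lemma langFrom_read (p : Q) (x : List A) :
    M.LangFrom (hdet.read p x) = {w | appW x w ∈ M.LangFrom p} := by
  have hrun : ∀ w n, hdet.run p (appW x w) (x.length + n) = hdet.run (hdet.read p x) w n := by
    intro w n
    simp [run, prefW_appW, read_append]
  ext w
  simp only [Set.mem_ofPred_eq, hdet.mem_langFrom_iff]
  constructor
  · rintro ⟨N, hN⟩
    refine ⟨x.length + N, fun n hn => ?_⟩
    obtain ⟨m, rfl⟩ := Nat.exists_eq_add_of_le (le_trans (Nat.le_add_right _ N) hn)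
    rw [hrun, appW_length_add]
    exact hN m (by omega)
  · rintro ⟨N, hN⟩
    exact ⟨N, fun m hm => by simpa [hrun] using hN (x.length + m) (by omega)⟩

lemma safeReach_iff {p q : Q} {w : List A} :
    M.SafeReach p w q ↔ w ∈ M.Lsf p ∧ hdet.read p w = q := by
  have key : ∀ {p q : Q} {w : List A}, M.SafeReach p w q → hdet.read p w = q := by
    intro p q w h
    induction w generalizing p with
    | nil => exact h
    | cons a w ih =>
      obtain ⟨p', ha, hw⟩ := h
      rw [read_cons, ← (Prod.ext_iff.1 (hdet.mem_delta_iff.1 ha)).2]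
      exact ih hw
  exact ⟨fun h => ⟨⟨q, h⟩, key h⟩, fun ⟨⟨q', h⟩, hq⟩ => hq ▸ (key h).symm ▸ h⟩

lemma cons_mem_lsf_iff {p : Q} {a : A} {w : List A} :
    a :: w ∈ M.Lsf p ↔ (hdet.next p a).1 = Rk.two ∧ w ∈ M.Lsf (hdet.next p a).2 := by
  constructor
  · rintro ⟨q, p', ha, hw⟩
    obtain ⟨hrk, rfl⟩ := Prod.ext_iff.1 (hdet.mem_delta_iff.1 ha)
    exact ⟨hrk.symm, q, hw⟩
  · rintro ⟨hrk, q, hw⟩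
    exact ⟨q, _, hdet.mem_delta_iff.2 (Prod.ext hrk.symm rfl), hw⟩

lemma append_mem_lsf_iff {p : Q} {u v : List A} :
    u ++ v ∈ M.Lsf p ↔ u ∈ M.Lsf p ∧ v ∈ M.Lsf (hdet.read p u) := by
  constructor
  · rintro ⟨q, h⟩
    obtain ⟨r, hu, hv⟩ := safeReach_append.1 h
    exact ⟨⟨r, hu⟩, (hdet.safeReach_iff.1 hu).2 ▸ ⟨q, hv⟩⟩
  · rintro ⟨⟨r, hu⟩, q, hv⟩
    exact ⟨q, safeReach_append.2 ⟨r, hu, (hdet.safeReach_iff.1 hu).2 ▸ hv⟩⟩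

lemma forall_prefW_mem_lsf_iff {p : Q} {β : ℕ → A} :
    (∀ l, prefW β l ∈ M.Lsf p) ↔ ∀ n, (hdet.next (hdet.run p β n) (β n)).1 = Rk.two := by
  have step : ∀ l, prefW β (l + 1) ∈ M.Lsf p ↔
      prefW β l ∈ M.Lsf p ∧ (hdet.next (hdet.run p β l) (β l)).1 = Rk.two := by
    intro l
    rw [prefW_succ, hdet.append_mem_lsf_iff, hdet.cons_mem_lsf_iff]
    exact and_congr_right fun _ => and_iff_left ⟨_, rfl⟩
  constructor
  · exact fun h n => ((step n).1 (h (n + 1))).2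
  · intro h l
    induction l with
    | zero => exact ⟨p, rfl⟩
    | succ l ih => exact (step l).2 ⟨ih, h l⟩

lemma mem_langFrom_iff_safe {p : Q} {w : ℕ → A} :
    w ∈ M.LangFrom p ↔ ∃ N, ∀ n, N ≤ n → ∀ l, prefW (dropW w n) l ∈ M.Lsf (hdet.run p w n) := by
  have hshift : ∀ n m, (hdet.next (hdet.run (hdet.run p w n) (dropW w n) m) (dropW w n m)).1 =
      (hdet.next (hdet.run p w (n + m)) (w (n + m))).1 := fun n m => by rw [run_add]; rfl
  simp only [hdet.forall_prefW_mem_lsf_iff, hshift]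
  rw [hdet.mem_langFrom_iff]
  constructor
  · rintro ⟨N, hN⟩
    exact ⟨N, fun n hn m => hN (n + m) (by omega)⟩
  · rintro ⟨N, hN⟩
    exact ⟨N, fun n hn => by simpa using hN n hn 0⟩

include hdet in
lemma mem_langFrom_of_forall_prefW_mem_lsf {p : Q} {β : ℕ → A}
    (h : ∀ l, prefW β l ∈ M.Lsf p) : β ∈ M.LangFrom p :=
  hdet.mem_langFrom_iff.2 ⟨0, fun n _ => hdet.forall_prefW_mem_lsf_iff.1 h n⟩

lemma append_mem_safeLoopPrefixes_iff {p : Q} {v : List A} (hv : v ∈ M.safeLoopPrefixes p)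
    (x : List A) : v ++ x ∈ M.safeLoopPrefixes p ↔ x ∈ M.safeLoopPrefixes (hdet.read p v) := by
  obtain ⟨z, hz⟩ := hv
  obtain ⟨r, hvr, hzr⟩ := safeReach_append.1 hz
  obtain rfl := (hdet.safeReach_iff.1 hvr).2
  constructor
  · rintro ⟨y, hy⟩
    rw [List.append_assoc, safeReach_append] at hy
    obtain ⟨r', hvr', hxy⟩ := hy
    obtain rfl := (hdet.safeReach_iff.1 hvr').2
    exact ⟨y ++ v, by rw [← List.append_assoc, safeReach_append]; exact ⟨p, hxy, hvr⟩⟩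
  · rintro ⟨y, hy⟩
    refine ⟨y ++ z, ?_⟩
    rw [List.append_assoc, safeReach_append]
    exact ⟨_, hvr, by rw [← List.append_assoc, safeReach_append]; exact ⟨_, hy, hzr⟩⟩

include hdet in
lemma iterW_mem_langFrom [Nonempty A] {p : Q} {c : List A} (hc : c ≠ [])
    (h : M.SafeReach p c p) : iterW c ∈ M.LangFrom p := by
  refine hdet.mem_langFrom_of_forall_prefW_mem_lsf fun l =>
    mem_lsf_of_prefix ?_ ⟨p, safeReach_repCat h l⟩
  rw [← prefW_iterW hc]
  exact prefW_prefix _ (Nat.le_mul_of_pos_right l (List.length_pos_iff.2 hc))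

lemma exists_safeReach_repCat [Nonempty A] [Finite Q] {p : Q} {v : List A} (hv : v ≠ [])
    (h : iterW v ∈ M.LangFrom p) : ∃ k j, 0 < j ∧
      M.SafeReach (hdet.read p (repCat v k)) (repCat v j) (hdet.read p (repCat v k)) := by
  obtain ⟨N, hN⟩ := hdet.mem_langFrom_iff_safe.1 h
  obtain ⟨q, hq⟩ := exists_frequently_eq fun k => hdet.read p (repCat v k)
  obtain ⟨i, hi, rfl⟩ := hq N
  obtain ⟨j, hj, hji⟩ := hq (i + 1)
  refine ⟨i, j - i, by omega, hdet.safeReach_iff.2 ⟨?_, ?_⟩⟩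
  · have hsafe := hN (i * v.length)
      (hi.trans (Nat.le_mul_of_pos_right i (List.length_pos_iff.2 hv))) ((j - i) * v.length)
    rwa [dropW_iterW hv, prefW_iterW hv, run, prefW_iterW hv] at hsafe
  · rw [← read_append, ← repCat_add, Nat.add_sub_cancel' (by omega), hji]

lemma exists_forall_prefW_mem_safeLoopPrefixes [Finite Q] {p : Q} {α : ℕ → A}
    (h : α ∈ M.LangFrom p) :
    ∃ n₀, ∀ l, prefW (dropW α n₀) l ∈ M.safeLoopPrefixes (hdet.run p α n₀) := by
  obtain ⟨N, hN⟩ := hdet.mem_langFrom_iff_safe.1 h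
  obtain ⟨q, hq⟩ := exists_frequently_eq fun k => hdet.run p α (N + k)
  obtain ⟨i, -, hi⟩ := hq 0
  refine ⟨N + i, fun l => ?_⟩
  obtain ⟨j, hj, hji⟩ := hq (i + l)
  have hloop : M.SafeReach (hdet.run p α (N + i)) (prefW (dropW α (N + i)) (j - i))
      (hdet.run p α (N + i)) := by
    refine hdet.safeReach_iff.2 ⟨hN _ (Nat.le_add_right N i) _, ?_⟩
    rw [← run, ← run_add, hi, show N + i + (j - i) = N + j by omega, hji]
  exact mem_safeLoopPrefixes_of_prefix (prefW_prefix _ (by omega))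
    (mem_safeLoopPrefixes_of_safeReach hloop)

def loopEnds (R : Set (ℕ → A)) (v : List A) : Set Q :=
  {e | ∃ p, M.LangFrom p = R ∧ v ∈ M.safeLoopPrefixes p ∧ hdet.read p v = e}

include hdet in
lemma resL_append_of_safeReach {L : Set (ℕ → A)} {p : Q} {u m : List A}
    (hp : M.LangFrom p = ResL L u) (hm : M.SafeReach p m p) : ResL L (u ++ m) = ResL L u := by
  rw [resL_append, ← hp, ← hdet.langFrom_read, (hdet.safeReach_iff.1 hm).2]

lemma loopEnds_refine {L : Set (ℕ → A)} {u u₁ u₂ : List A} (hsim : SimL L (u₁ ++ u₂) u)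
    (v : List A) : hdet.loopEnds (ResL L u₁) (u₂ ++ v) ⊆ hdet.loopEnds (ResL L u) v := by
  rintro e ⟨p, hp, hpv, rfl⟩
  have hu₂ := mem_safeLoopPrefixes_of_prefix (List.prefix_append u₂ v) hpv
  refine ⟨hdet.read p u₂, ?_, (hdet.append_mem_safeLoopPrefixes_iff hu₂ v).1 hpv,
    (hdet.read_append p u₂ v).symm⟩
  rw [← simL_iff_resL.1 hsim, resL_append, ← hp, langFrom_read]

lemma exists_safeReach_dominating [Finite Q] (p : Q) : ∃ c, M.SafeReach p c p ∧
    ∀ e ∈ hdet.loopEnds (M.LangFrom p) c, M.safeLoopPrefixes p ⊆ M.safeLoopPrefixes e := by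
  let alive : List A → Set Q := fun c =>
    {p' | M.LangFrom p' = M.LangFrom p ∧ c ∈ M.safeLoopPrefixes p'}
  obtain ⟨c, hc, hmin⟩ :=
    (measure fun c => (alive c).ncard).wf.has_min {c | M.SafeReach p c p} ⟨[], rfl⟩
  refine ⟨c, hc, ?_⟩
  rintro _ ⟨p', hp', hcp', rfl⟩ x ⟨y, hxy⟩
  by_contra hx
  -- extending `c` by the cycle `x ++ y` kills `p'` while keeping every state of `alive`
  have hsub : alive (c ++ (x ++ y)) ⊆ alive c := fun q ⟨hq, hcq⟩ =>
    ⟨hq, mem_safeLoopPrefixes_of_prefix (List.prefix_append _ _) hcq⟩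
  have hkill : p' ∉ alive (c ++ (x ++ y)) := fun ⟨_, h⟩ =>
    hx (mem_safeLoopPrefixes_of_prefix (List.prefix_append x y)
      ((hdet.append_mem_safeLoopPrefixes_iff hcp' _).1 h))
  exact hmin _ (safeReach_append.2 ⟨p, hc, hxy⟩) <| Set.ncard_lt_ncard
    ((Set.ssubset_iff_of_subset hsub).2 ⟨p', ⟨hp', hcp'⟩, hkill⟩) (Set.toFinite _)

def IsAnchor (w : List A) (n : ℕ) : Prop :=
  n ≤ w.length ∧ w.drop n ∈ M.safeLoopPrefixes (hdet.read hdet.start (w.take n))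

lemma exists_isAnchor (w : List A) : ∃ n, hdet.IsAnchor w n :=
  ⟨w.length, le_rfl, by simpa using nil_mem_safeLoopPrefixes _⟩

noncomputable def anchor (w : List A) : ℕ := Nat.find (hdet.exists_isAnchor w)

lemma isAnchor_anchor (w : List A) : hdet.IsAnchor w (hdet.anchor w) :=
  Nat.find_spec (hdet.exists_isAnchor w)

lemma anchor_le {w : List A} {n : ℕ} (h : hdet.IsAnchor w n) : hdet.anchor w ≤ n :=
  Nat.find_min' (hdet.exists_isAnchor w) h

lemma anchor_le_anchor_append (w : List A) (a : A) : hdet.anchor w ≤ hdet.anchor (w ++ [a]) := by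
  obtain ⟨hle, hsafe⟩ := hdet.isAnchor_anchor (w ++ [a])
  rcases Nat.lt_or_ge w.length (hdet.anchor (w ++ [a])) with hlt | hle'
  · exact (hdet.isAnchor_anchor w).1.trans hlt.le
  · refine hdet.anchor_le ⟨hle', ?_⟩
    rw [List.drop_append_of_le_length hle', List.take_append_of_le_length hle'] at hsafe
    exact mem_safeLoopPrefixes_of_prefix (List.prefix_append _ _) hsafe

lemma eventually_anchor_prefW_succ_eq [Finite Q] {α : ℕ → A} (hα : α ∈ M.Lang) :
    ∃ N, ∀ n, N ≤ n → hdet.anchor (prefW α (n + 1)) = hdet.anchor (prefW α n) := by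
  rw [hdet.lang_eq] at hα
  obtain ⟨n₀, hn₀⟩ := hdet.exists_forall_prefW_mem_safeLoopPrefixes hα
  set f := fun n => hdet.anchor (prefW α n)
  have hmono : Monotone f := monotone_nat_of_le_succ fun n => by
    simp only [f, prefW_succ]
    exact hdet.anchor_le_anchor_append _ _
  have hbdd : BddAbove (Set.range f) := by
    refine ⟨n₀, ?_⟩
    rintro _ ⟨n, rfl⟩
    refine (hmono (le_max_left n n₀)).trans (hdet.anchor_le ⟨by simp, ?_⟩)
    rw [take_prefW _ (le_max_right _ _), drop_prefW _ (le_max_right _ _)]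
    exact hn₀ _
  obtain ⟨N, hN⟩ := Nat.sSup_mem (Set.range_nonempty f) hbdd
  have hmax : ∀ n, f n ≤ f N := fun n => hN ▸ le_csSup hbdd ⟨n, rfl⟩
  exact ⟨N, fun n hn => (le_antisymm (hmax _) (hmono (by omega))).trans
    (le_antisymm (hmax n) (hmono hn)).symm⟩

noncomputable def strategyRank (w : List A) (a : A) : Rk :=
  if hdet.anchor (w ++ [a]) = hdet.anchor w then Rk.two else Rk.one

lemma eventually_strategyRank_eq_two [Finite Q] {α : ℕ → A} (hα : α ∈ M.Lang) :
    ∃ N, ∀ n, N ≤ n → hdet.strategyRank (prefW α n) (α n) = Rk.two := by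
  obtain ⟨N, hN⟩ := hdet.eventually_anchor_prefW_succ_eq hα
  exact ⟨N, fun n hn => by rw [strategyRank, ← prefW_succ, if_pos (hN n hn)]⟩

section Language

variable {L : Set (ℕ → A)} (hL : M.Lang = L)
include hdet hL

lemma resL_eq_langFrom (u : List A) : ResL L u = M.LangFrom (hdet.read hdet.start u) := by
  rw [langFrom_read, ← lang_eq, hL]; rfl

variable [Nonempty A] [Finite Q]

theorem not_approxBot_iff {u v : List A} :
    ¬ ApproxBot L u v ↔ ∃ p, M.LangFrom p = ResL L u ∧ v ∈ M.safeLoopPrefixes p := by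
  constructor
  · intro h
    by_cases hv : v = []
    · exact ⟨_, (hdet.resL_eq_langFrom hL u).symm, hv ▸ nil_mem_safeLoopPrefixes _⟩
    obtain ⟨x, hsim, hmem⟩ : ∃ x, SimL L (u ++ v ++ x) u ∧ upW u (v ++ x) ∈ L := by
      by_contra! hc
      exact h ⟨hv, hc⟩
    have hiter : iterW (v ++ x) ∈ M.LangFrom (hdet.read hdet.start u) := by
      rw [← hdet.resL_eq_langFrom hL]; exact hmem
    obtain ⟨k, j, hj, hloop⟩ := hdet.exists_safeReach_repCat (by simp [hv]) hiter
    obtain ⟨j, rfl⟩ : ∃ j', j = j' + 1 := ⟨j - 1, by omega⟩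
    refine ⟨_, ?_, mem_safeLoopPrefixes_of_prefix ⟨x ++ repCat (v ++ x) j, ?_⟩
      (mem_safeLoopPrefixes_of_safeReach hloop)⟩
    · rw [← read_append, ← hdet.resL_eq_langFrom hL]
      exact resL_append_repCat (by rw [← List.append_assoc]; exact simL_iff_resL.1 hsim) k
    · simp [repCat]
  · rintro ⟨p, hp, z, hz⟩ ⟨hv, hall⟩
    refine hall z (simL_iff_resL.2 ?_) ?_
    · rw [List.append_assoc]; exact hdet.resL_append_of_safeReach hp hz
    · have hiter := hdet.iterW_mem_langFrom (by simp [hv]) hz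
      rw [hp] at hiter
      exact hiter

lemma not_approxBot_iff_nonempty {u v : List A} :
    ¬ ApproxBot L u v ↔ (hdet.loopEnds (ResL L u) v).Nonempty := by
  rw [hdet.not_approxBot_iff hL]
  exact ⟨fun ⟨p, hp, hv⟩ => ⟨_, p, hp, hv, rfl⟩, fun ⟨_, p, hp, hv, _⟩ => ⟨p, hp, hv⟩⟩

theorem sfl_eq_biUnion (u v : List A) :
    Sfl L u v = ⋃ e ∈ hdet.loopEnds (ResL L u) v, M.safeLoopPrefixes e := by
  ext x
  simp only [Sfl, Set.mem_ofPred_eq, Set.mem_iUnion, hdet.not_approxBot_iff hL, exists_prop]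
  constructor
  · rintro ⟨p, hp, hvx⟩
    have hv := mem_safeLoopPrefixes_of_prefix (List.prefix_append v x) hvx
    exact ⟨_, ⟨p, hp, hv, rfl⟩, (hdet.append_mem_safeLoopPrefixes_iff hv x).1 hvx⟩
  · rintro ⟨_, ⟨p, hp, hv, rfl⟩, hx⟩
    exact ⟨p, hp, (hdet.append_mem_safeLoopPrefixes_iff hv x).2 hx⟩

lemma sfl_refine_subset {u u₁ u₂ : List A} (hsim : SimL L (u₁ ++ u₂) u) (v : List A) :
    Sfl L u₁ (u₂ ++ v) ⊆ Sfl L u v := by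
  rw [hdet.sfl_eq_biUnion hL, hdet.sfl_eq_biUnion hL]
  exact Set.biUnion_subset_biUnion_left (hdet.loopEnds_refine hsim v)

lemma not_approxBot_of_append {u v w : List A} (h : ¬ ApproxBot L u (v ++ w)) :
    ¬ ApproxBot L u v := by
  obtain ⟨p, hp, hvw⟩ := (hdet.not_approxBot_iff hL).1 h
  exact (hdet.not_approxBot_iff hL).2
    ⟨p, hp, mem_safeLoopPrefixes_of_prefix (List.prefix_append v w) hvw⟩

lemma isPointed_append {u v x : List A} (h : IsPointed L u v) (hx : x ∈ Sfl L u v) :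
    IsPointed L u (v ++ x) := by
  refine ⟨hx, fun u₁ u₂ hsim hnb => ?_⟩
  rw [← List.append_assoc] at hnb ⊢
  rw [sfl_append, sfl_append, h.2 u₁ u₂ hsim (hdet.not_approxBot_of_append hL hnb)]

lemma finite_range_sfl : (Set.range fun uv : List A × List A => Sfl L uv.1 uv.2).Finite :=
  (Set.finite_range fun S : Set Q => ⋃ e ∈ S, M.safeLoopPrefixes e).subset <| by
    rintro _ ⟨⟨u, v⟩, rfl⟩
    exact ⟨_, (hdet.sfl_eq_biUnion hL u v).symm⟩

/-- A pair with inclusion-minimal `Sfl` (`Sfl` takes finitely many values) is pointed. -/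
theorem exists_isPointed (P : List A → List A → Prop)
    (hP : ∀ u v u₁ u₂, P u v → SimL L (u₁ ++ u₂) u → ¬ ApproxBot L u₁ (u₂ ++ v) →
      P u₁ (u₂ ++ v))
    (h₀ : ∃ u v, P u v ∧ ¬ ApproxBot L u v) : ∃ u v, P u v ∧ IsPointed L u v := by
  let 𝒮 := {s | ∃ u v, P u v ∧ ¬ ApproxBot L u v ∧ Sfl L u v = s}
  have hfin : 𝒮.Finite :=
    (hdet.finite_range_sfl hL).subset fun _ ⟨u, v, _, _, hs⟩ => ⟨(u, v), hs⟩
  obtain ⟨u, v, hPuv, hnb⟩ := h₀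
  obtain ⟨_, ⟨u, v, hPuv, hnb, rfl⟩, hmin⟩ := hfin.exists_minimal ⟨_, u, v, hPuv, hnb, rfl⟩
  refine ⟨u, v, hPuv, hnb, fun u₁ u₂ hsim hnb₁ => ?_⟩
  have hsub := hdet.sfl_refine_subset hL hsim v
  exact le_antisymm (hmin ⟨u₁, u₂ ++ v, hP u v u₁ u₂ hPuv hsim hnb₁, hnb₁, rfl⟩ hsub) hsub

theorem exists_isPointed_dominating (w : List A) :
    ∃ uv : List A × List A, IsPointed L uv.1 uv.2 ∧ SimL L (uv.1 ++ uv.2) w ∧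
      M.safeLoopPrefixes (hdet.read hdet.start w) ⊆ Sfl L uv.1 uv.2 := by
  set p := hdet.read hdet.start w
  have hp : M.LangFrom p = ResL L w := (hdet.resL_eq_langFrom hL w).symm
  obtain ⟨c, hc, hdom⟩ := hdet.exists_safeReach_dominating p
  obtain ⟨u, v, ⟨hsim, hdom'⟩, hpt⟩ := hdet.exists_isPointed hL
    (fun u v => SimL L (u ++ v) w ∧
      ∀ e ∈ hdet.loopEnds (ResL L u) v, M.safeLoopPrefixes p ⊆ M.safeLoopPrefixes e)
    (fun u v u₁ u₂ ⟨hsim, hd⟩ hsim₁ _ => ⟨simL_iff_resL.2 <| by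
      rw [← List.append_assoc, resL_append_congr (simL_iff_resL.1 hsim₁), simL_iff_resL.1 hsim],
      fun e he => hd e (hdet.loopEnds_refine hsim₁ v he)⟩)
    ⟨w, c, ⟨simL_iff_resL.2 (hdet.resL_append_of_safeReach hp hc), hp ▸ hdom⟩,
      (hdet.not_approxBot_iff hL).2 ⟨p, hp, mem_safeLoopPrefixes_of_safeReach hc⟩⟩
  refine ⟨(u, v), hpt, hsim, fun x hx => ?_⟩
  obtain ⟨e, he⟩ := (hdet.not_approxBot_iff_nonempty hL).1 hpt.1
  rw [hdet.sfl_eq_biUnion hL]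
  exact Set.mem_biUnion he (hdom' e he hx)

lemma rank_two_mem_delta_iff {u v : List A} (h : IsPointed L u v) {a : A} {s : CanonState L} :
    (cls L u v h, a, Rk.two, s) ∈ (canonAut L).delta ↔
      ∃ h' : IsPointed L u (v ++ [a]), s = cls L u (v ++ [a]) h' := by
  constructor
  · rintro (⟨u₀, v₀, h₀, h₀', hnb₀, he, -, hs⟩ | ⟨-, -, -, -, -, -, -, -, hrk, -⟩)
    · dsimp only at he hs hnb₀
      have hequiv := cls_eq_cls_iff.1 he
      have ha : [a] ∈ Sfl L u v := hequiv.2 ▸ hnb₀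
      exact ⟨hdet.isPointed_append hL h ha, hs.trans (cls_eq_cls_iff.2 (hequiv.append [a])).symm⟩
    · exact nomatch hrk
  · rintro ⟨h', rfl⟩
    exact Or.inl ⟨u, v, h, h', h'.1, rfl, rfl, rfl⟩

lemma safeReach_cls_iff {u v x : List A} (h : IsPointed L u v) {s : CanonState L} :
    (canonAut L).SafeReach (cls L u v h) x s ↔
      ∃ h' : IsPointed L u (v ++ x), s = cls L u (v ++ x) h' := by
  induction x generalizing v with
  | nil =>
    simp only [SafeReach, List.append_nil]
    exact ⟨fun he => ⟨h, he.symm⟩, fun ⟨_, he⟩ => he.symm⟩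
  | cons a x ih =>
    have hlist : v ++ a :: x = v ++ [a] ++ x := by simp
    constructor
    · rintro ⟨s₁, ha, hx⟩
      obtain ⟨h₁, rfl⟩ := (hdet.rank_two_mem_delta_iff hL h).1 ha
      obtain ⟨h', rfl⟩ := (ih h₁).1 hx
      exact ⟨hlist ▸ h', cls_congr rfl hlist.symm _ _⟩
    · rintro ⟨h', rfl⟩
      have ha : [a] ∈ Sfl L u v := hdet.not_approxBot_of_append hL (w := x) (hlist ▸ h'.1)
      have h₁ := hdet.isPointed_append hL h ha
      exact ⟨_, (hdet.rank_two_mem_delta_iff hL h).2 ⟨h₁, rfl⟩,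
        (ih h₁).2 ⟨hlist ▸ h', cls_congr rfl hlist _ _⟩⟩

theorem appW_mem_resL_of_forall_prefW_mem_sfl {u v : List A} {β : ℕ → A}
    (hall : ∀ k, prefW β k ∈ Sfl L u v) : appW v β ∈ ResL L u := by
  choose P hP hPβ using fun k => (hdet.not_approxBot_iff hL).1 (hall k)
  obtain ⟨p, hp⟩ := exists_frequently_eq P
  have hloop : ∀ k, v ++ prefW β k ∈ M.safeLoopPrefixes p := fun k => by
    obtain ⟨n, hkn, rfl⟩ := hp k
    exact mem_safeLoopPrefixes_of_prefix
      ((List.prefix_append_right_inj v).2 (prefW_prefix β hkn)) (hPβ n)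
  obtain ⟨n, -, rfl⟩ := hp 0
  rw [← hP n]
  refine hdet.mem_langFrom_of_forall_prefW_mem_lsf fun l =>
    safeLoopPrefixes_subset_lsf _ (mem_safeLoopPrefixes_of_prefix ?_ (hloop l))
  rw [← prefW_appW]
  exact prefW_prefix _ (Nat.le_add_left l v.length)

theorem langFrom_subset_residual (s : CanonState L) : (canonAut L).LangFrom s ⊆ s.residual := by
  rintro α ⟨ρ, r, rfl, hstep, N, hN⟩
  have hres : ∀ n, (ρ n).residual = {w | appW (prefW α n) w ∈ (ρ 0).residual} := by
    intro n
    induction n with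
    | zero => simp [prefW]
    | succ n ih =>
      rw [residual_of_mem_delta (hstep n), ih]
      simp [prefW_succ, appW_append, appW_singleton]
  obtain ⟨u, v, h, hρN⟩ := (ρ N).exists_eq_cls
  have hsfl : ∀ l, prefW (dropW α N) l ∈ Sfl L u v := fun l => by
    have hsafe := safeReach_of_run hstep hN l
    rw [hρN, hdet.safeReach_cls_iff hL] at hsafe
    exact hsafe.1.1
  have hmem : dropW α N ∈ (ρ N).residual := by
    rw [hρN, residual_cls, resL_append]
    exact hdet.appW_mem_resL_of_forall_prefW_mem_sfl hL hsfl
  rw [hres N] at hmem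
  rwa [Set.mem_ofPred_eq, appW_prefW_dropW] at hmem

noncomputable def dominatingPair (w : List A) : List A × List A :=
  (hdet.exists_isPointed_dominating hL w).choose

lemma isPointed_dominatingPair (w : List A) :
    IsPointed L (hdet.dominatingPair hL w).1 (hdet.dominatingPair hL w).2 :=
  (hdet.exists_isPointed_dominating hL w).choose_spec.1

lemma simL_dominatingPair (w : List A) :
    SimL L ((hdet.dominatingPair hL w).1 ++ (hdet.dominatingPair hL w).2) w :=
  (hdet.exists_isPointed_dominating hL w).choose_spec.2.1

lemma safeLoopPrefixes_subset_sfl_dominatingPair (w : List A) :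
    M.safeLoopPrefixes (hdet.read hdet.start w) ⊆
      Sfl L (hdet.dominatingPair hL w).1 (hdet.dominatingPair hL w).2 :=
  (hdet.exists_isPointed_dominating hL w).choose_spec.2.2

noncomputable def strategyPair (w : List A) : List A × List A :=
  ((hdet.dominatingPair hL (w.take (hdet.anchor w))).1,
    (hdet.dominatingPair hL (w.take (hdet.anchor w))).2 ++ w.drop (hdet.anchor w))

lemma isPointed_strategyPair (w : List A) :
    IsPointed L (hdet.strategyPair hL w).1 (hdet.strategyPair hL w).2 :=
  hdet.isPointed_append hL (hdet.isPointed_dominatingPair hL _)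
    (hdet.safeLoopPrefixes_subset_sfl_dominatingPair hL _ (hdet.isAnchor_anchor w).2)

noncomputable def strategy (w : List A) : CanonState L :=
  cls L _ _ (hdet.isPointed_strategyPair hL w)

lemma residual_strategy (w : List A) : (hdet.strategy hL w).residual = ResL L w := by
  rw [strategy, residual_cls, strategyPair, ← List.append_assoc,
    resL_append_congr (simL_iff_resL.1 (hdet.simL_dominatingPair hL _)), List.take_append_drop]

lemma strategy_nil_mem_init : hdet.strategy hL [] ∈ (canonAut L).init := by
  rw [mem_init_iff, residual_strategy, resL_nil]

lemma strategy_mem_delta (w : List A) (a : A) :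
    (hdet.strategy hL w, a, hdet.strategyRank w a, hdet.strategy hL (w ++ [a])) ∈
      (canonAut L).delta := by
  unfold strategyRank
  split_ifs with he
  · have hle := (hdet.isAnchor_anchor w).1
    have hpair : hdet.strategyPair hL (w ++ [a]) =
        ((hdet.strategyPair hL w).1, (hdet.strategyPair hL w).2 ++ [a]) := by
      simp only [strategyPair, he, List.take_append_of_le_length hle,
        List.drop_append_of_le_length hle, List.append_assoc]
    have h' : IsPointed L (hdet.strategyPair hL w).1 ((hdet.strategyPair hL w).2 ++ [a]) := by
      simpa only [hpair] using hdet.isPointed_strategyPair hL (w ++ [a])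
    exact (hdet.rank_two_mem_delta_iff hL _).2
      ⟨h', cls_congr (congrArg Prod.fst hpair) (congrArg Prod.snd hpair) _ _⟩
  · exact rank_one_mem_delta_iff.2 (by rw [residual_strategy, residual_strategy, resL_snoc])

/-- From `⟦u,v⟧`, jump to the strategy's state after `uv a` and follow the strategy. -/
theorem residual_subset_langFrom (s : CanonState L) : s.residual ⊆ (canonAut L).LangFrom s := by
  intro α hα
  obtain ⟨u, v, h, rfl⟩ := s.exists_eq_cls
  have hγ : appW (u ++ v) α ∈ M.Lang := hL ▸ hα
  obtain ⟨N, hN⟩ := hdet.eventually_strategyRank_eq_two hγ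
  refine ⟨fun n => if n = 0 then cls L u v h else hdet.strategy hL (u ++ v ++ prefW α n),
    fun n => if n = 0 then Rk.one else hdet.strategyRank (u ++ v ++ prefW α n) (α n), rfl,
    fun n => ?_, N + 1, fun n hn => ?_⟩
  · rcases n with _ | n
    · refine rank_one_mem_delta_iff.2 ?_
      simp only [Nat.zero_add, if_pos, one_ne_zero, if_false]
      rw [residual_strategy, residual_cls, show prefW α 1 = [α 0] from rfl, resL_snoc]
    · simpa [prefW_succ] using hdet.strategy_mem_delta hL (u ++ v ++ prefW α (n + 1)) (α (n + 1))
  · obtain ⟨n, rfl⟩ : ∃ m, n = m + 1 := ⟨n - 1, by omega⟩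
    have hrank := hN ((u ++ v).length + (n + 1)) (by omega)
    rwa [prefW_appW, appW_length_add] at hrank

theorem langFrom_canonAut (s : CanonState L) : (canonAut L).LangFrom s = s.residual :=
  (hdet.langFrom_subset_residual hL s).antisymm (hdet.residual_subset_langFrom hL s)

theorem canonAut_semDet : (canonAut L).SemDet := fun _ _ _ _ hmem => by
  rw [hdet.langFrom_canonAut hL, hdet.langFrom_canonAut hL]
  exact residual_of_mem_delta hmem

theorem canonAut_unsafeSat : (canonAut L).UnsafeSat := fun _ _ _ h => by
  rw [hdet.langFrom_canonAut hL, hdet.langFrom_canonAut hL] at h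
  exact rank_one_mem_delta_iff.2 h

/-- The rank-2 step `⟦u,v⟧ → ⟦u,va⟧` lies on a safe cycle `vaz` of `M`; reading `zv` returns to
`⟦u,vazv⟧`, which is `⟦u,v⟧` by pointedness. -/
theorem canonAut_normalized : (canonAut L).Normalized := by
  intro q a q' hmem
  obtain ⟨u, v, h, rfl⟩ := q.exists_eq_cls
  obtain ⟨h₁, rfl⟩ := (hdet.rank_two_mem_delta_iff hL h).1 hmem
  obtain ⟨p, hp, z, hloop⟩ := (hdet.not_approxBot_iff hL).1 h₁.1
  have hlist : v ++ [a] ++ (z ++ v) = v ++ [a] ++ z ++ v := by simp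
  have hcycle := mem_safeLoopPrefixes_of_safeReach hloop
  have hnb : ¬ ApproxBot L u (v ++ [a] ++ z ++ v) := by
    refine (hdet.not_approxBot_iff hL).2
      ⟨p, hp, (hdet.append_mem_safeLoopPrefixes_iff hcycle v).2 ?_⟩
    rw [(hdet.safeReach_iff.1 hloop).2]
    exact mem_safeLoopPrefixes_of_prefix ⟨[a] ++ z, by simp⟩ hcycle
  have hres : ResL L (u ++ (v ++ [a] ++ z)) = ResL L u := hdet.resL_append_of_safeReach hp hloop
  refine ⟨z ++ v, (hdet.safeReach_cls_iff hL h₁).2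
    ⟨hdet.isPointed_append hL h₁ (show ¬ ApproxBot L u _ from hlist ▸ hnb),
      cls_eq_cls_iff.2 ⟨?_, ?_⟩⟩⟩
  · rw [simL_iff_resL, hlist, ← List.append_assoc, resL_append_congr hres]
  · rw [hlist]
    exact h.2 u _ (simL_iff_resL.2 hres) hnb

theorem canonAut_historyDet : (canonAut L).HistoryDet := by
  refine ⟨hdet.strategy hL, hdet.strategy_nil_mem_init hL,
    fun w a => ⟨_, hdet.strategy_mem_delta hL w a⟩, fun α hα => ?_⟩
  obtain ⟨s, hs, hαs⟩ := hα
  have hαL : α ∈ M.Lang := by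
    rw [hL, ← mem_init_iff.1 hs]
    exact hdet.langFrom_subset_residual hL s hαs
  obtain ⟨N, hN⟩ := hdet.eventually_strategyRank_eq_two hαL
  exact ⟨fun n => hdet.strategyRank (prefW α n) (α n),
    fun n => by rw [prefW_succ]; exact hdet.strategy_mem_delta hL _ _, N, hN⟩

end Language

end Deterministic

end CoBuchi

theorem stmt9_general {A : Type} [Nonempty A] (L : Set (ℕ → A))
    (hrec : DCWRecognizable L) :
    (canonAut L).SemDet ∧ (canonAut L).UnsafeSat ∧ (canonAut L).Normalized ∧
      (canonAut L).HistoryDet := by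
  obtain ⟨Q, _, M, hdet, hL⟩ := hrec
  exact ⟨hdet.canonAut_semDet hL, hdet.canonAut_unsafeSat hL, hdet.canonAut_normalized hL,
    hdet.canonAut_historyDet hL⟩

/-- `A_{≡_L}` is semantically-deterministic, unsafe-saturated,
normalized, and history-deterministic. -/
theorem stmt9 {A : Type} [Nonempty A] [Fintype A] (L : Set (ℕ → A))
    (hrec : DCWRecognizable L) :
    (canonAut L).SemDet ∧ (canonAut L).UnsafeSat ∧ (canonAut L).Normalized ∧
      (canonAut L).HistoryDet :=
  stmt9_general L hrec
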